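/- Let d ≥ 1, let B be a real symmetric positive semidefinite d×d matrix, and let b ∈ ℝ^d with b ∈ Range(B). Let Y ∈ ℝ^d be any vector with BY = b (the scalar b·Y is independent of the choice of Y) and assume 4 − b·Y > 0. Then there exists a constant c > 0 such that for every X ∈ ℝ^d, 1 + b·X + X·BX ≥ c(1 + (b·X)²). -/

import Mathlib

open Matrix

/-!
Write `t = b·X`, `q = X·BX` and `α = b·Y`. Since `b = BY`, Cauchy–Schwarz for the semi-inner
product `(x, y) ↦ x·By` gives `t² = (X·BY)² ≤ α q`, so the symbol `1 + t + q` dominates the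
quadratic `1 + t + t²/α`, whose discriminant is negative exactly when `α < 4`. Completing squares
gives the explicit constant `c = (4 - α) / (4 (α + 6))`.
-/

theorem Matrix.PosSemidef.dotProduct_mulVec_sq_le {n R : Type*} [Fintype n] [CommRing R]
    [LinearOrder R] [IsStrictOrderedRing R] [StarRing R] [TrivialStar R]
    {B : Matrix n n R} (hB : B.PosSemidef) (x y : n → R) :
    (x ⬝ᵥ B *ᵥ y) ^ 2 ≤ (x ⬝ᵥ B *ᵥ x) * (y ⬝ᵥ B *ᵥ y) := by
  classical
  have hsymm : LinearMap.IsSymm B.toBilin' := LinearMap.BilinForm.isSymm_iff.mp <|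
    isSymm_toBilin'_iff_isSymm.mpr (isHermitian_iff_isSymm.mp hB.isHermitian)
  have hnonneg (z : n → R) : 0 ≤ B.toBilin' z z := by
    simpa [toBilin'_apply'] using hB.dotProduct_mulVec_nonneg z
  simpa only [toBilin'_apply'] using B.toBilin'.apply_sq_le_of_symm hnonneg hsymm x y

theorem mul_one_add_sq_le_one_add_add_of_sq_le_mul {K : Type*} [Field K] [LinearOrder K]
    [IsStrictOrderedRing K] {α t q : K} (hα₀ : 0 ≤ α) (hα₄ : α ≤ 4) (hq : 0 ≤ q)
    (htq : t ^ 2 ≤ α * q) :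
    (4 - α) / (4 * (α + 6)) * (1 + t ^ 2) ≤ 1 + t + q := by
  rw [div_mul_eq_mul_div, div_le_iff₀ (by positivity)]
  -- `5 (α+4)² + 4 (α+4)(α+6) t + (α² + 8α + 32) t²`, the gap after using `2 t² ≤ (α+4) q`,
  -- is `((5 (α+4) + 2 (α+6) t)² + ((α-4) t)²) / 5`.
  nlinarith [sq_nonneg (5 * (α + 4) + 2 * (α + 6) * t), sq_nonneg ((α - 4) * t),
    mul_nonneg (sub_nonneg.mpr hα₄) hq]

theorem improved_dispersion_symbol_coercive_general
    (d : ℕ)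
    (B : Matrix (Fin d) (Fin d) ℝ)
    (hBpos : B.PosSemidef)
    (b Y : Fin d → ℝ)
    (hbY : B.mulVec Y = b)
    (h4 : 0 < 4 - b ⬝ᵥ Y) :
    ∃ c > 0, ∀ X : Fin d → ℝ,
      c * (1 + (b ⬝ᵥ X) ^ 2) ≤ 1 + b ⬝ᵥ X + X ⬝ᵥ B.mulVec X := by
  have hα : 0 ≤ b ⬝ᵥ Y := by
    simpa [hbY, dotProduct_comm] using hBpos.dotProduct_mulVec_nonneg Y
  refine ⟨(4 - b ⬝ᵥ Y) / (4 * (b ⬝ᵥ Y + 6)), by positivity, fun X ↦ ?_⟩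
  have hCS : (b ⬝ᵥ X) ^ 2 ≤ b ⬝ᵥ Y * (X ⬝ᵥ B *ᵥ X) := by
    simpa [hbY, dotProduct_comm, mul_comm] using hBpos.dotProduct_mulVec_sq_le X Y
  exact mul_one_add_sq_le_one_add_add_of_sq_le_mul hα (sub_pos.mp h4).le
    (by simpa using hBpos.dotProduct_mulVec_nonneg X) hCS

theorem improved_dispersion_symbol_coercive
    (d : ℕ) (hd : 1 ≤ d)
    (B : Matrix (Fin d) (Fin d) ℝ)
    (hBsym : B.IsSymm) (hBpos : B.PosSemidef)
    (b Y : Fin d → ℝ)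
    (hbY : B.mulVec Y = b)
    (h4 : 0 < 4 - b ⬝ᵥ Y) :
    ∃ c > 0, ∀ X : Fin d → ℝ,
      c * (1 + (b ⬝ᵥ X) ^ 2) ≤ 1 + b ⬝ᵥ X + X ⬝ᵥ B.mulVec X :=
  improved_dispersion_symbol_coercive_general d B hBpos b Y hbY h4
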